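/- arXiv:2510.17116 — 5 statements merged into one kernel-verified Lean document; each statement's English description precedes it below -/
import Mathlib

section
/- For every n ≥ 1, the number of permutations of [n] avoiding both patterns 132 and 231 equals 2^{n−1}. -/
/-- A permutation `π` of `[n]` contains the pattern given by the word `τ` (of length `k`)
if some subsequence of the one-line notation of `π` has the same relative order as `τ`. -/
def PContains {n k : ℕ} (π : Equiv.Perm (Fin n)) (τ : Fin k → ℕ) : Prop :=
  ∃ f : Fin k → Fin n, StrictMono f ∧ ∀ i j : Fin k, τ i < τ j ↔ π (f i) < π (f j)

/-- `π` avoids the pattern `τ`. -/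
def PAvoids {n k : ℕ} (π : Equiv.Perm (Fin n)) (τ : Fin k → ℕ) : Prop :=
  ¬ PContains π τ

/-- The `i`-th entry (1-indexed, values in `1..n`) of the one-line notation of `π`;
`0` if `i` is out of range. -/
def entry {n : ℕ} (π : Equiv.Perm (Fin n)) (i : ℕ) : ℕ :=
  if h : 1 ≤ i ∧ i ≤ n then ((π ⟨i - 1, by omega⟩ : Fin n) : ℕ) + 1 else 0

/-- `i` is a peak of `π`: `2 ≤ i ≤ n-1` and `π_{i-1} < π_i > π_{i+1}`. -/
def IsPeak {n : ℕ} (π : Equiv.Perm (Fin n)) (i : ℕ) : Prop :=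
  2 ≤ i ∧ i + 1 ≤ n ∧ entry π (i - 1) < entry π i ∧ entry π (i + 1) < entry π i

/-- The peak set of `π` (as a set of 1-indexed positions). -/
def peakSet {n : ℕ} (π : Equiv.Perm (Fin n)) : Set ℕ := {i | IsPeak π i}

/-- The reverse of `π`: `(π^r)_i = π_{n+1-i}`. -/
def reversePerm {n : ℕ} (π : Equiv.Perm (Fin n)) : Equiv.Perm (Fin n) :=
  (Fin.revPerm : Equiv.Perm (Fin n)).trans π

def NoPeak {n : ℕ} (π : Equiv.Perm (Fin n)) : Prop :=
  ∀ i j k : Fin n, i < j → j < k → π j < π i ∨ π j < π k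

lemma vec3_strictMono {n : ℕ} {i j k : Fin n} (h1 : i < j) (h2 : j < k) :
    StrictMono (![i, j, k] : Fin 3 → Fin n) := by
  intro a b hab
  fin_cases a <;> fin_cases b <;>
    first
      | exact absurd hab (by decide)
      | simpa using h1
      | simpa using h2
      | simpa using h1.trans h2

lemma vec3_rel {n : ℕ} (g : Fin n → Fin n) (i j k : Fin n) (t : Fin 3 → ℕ)
    (h01 : t 0 < t 1 ↔ g i < g j) (h10 : t 1 < t 0 ↔ g j < g i)
    (h02 : t 0 < t 2 ↔ g i < g k) (h20 : t 2 < t 0 ↔ g k < g i)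
    (h12 : t 1 < t 2 ↔ g j < g k) (h21 : t 2 < t 1 ↔ g k < g j) :
    ∀ a b : Fin 3, t a < t b ↔ g (![i,j,k] a) < g (![i,j,k] b) := by
  intro a b
  fin_cases a <;> fin_cases b <;>
    first
      | exact h01 | exact h10 | exact h02 | exact h20 | exact h12 | exact h21
      | simp [lt_irrefl]

theorem avoid_iff {n : ℕ} (π : Equiv.Perm (Fin n)) :
    (PAvoids π ![1, 3, 2] ∧ PAvoids π ![2, 3, 1]) ↔ NoPeak π := by
  constructor
  · rintro ⟨h1, h2⟩ i j k hij hjk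
    by_contra hc
    push_neg at hc
    obtain ⟨hji, hjk'⟩ := hc
    have hij' : π i < π j := lt_of_le_of_ne hji (by
      intro h; exact absurd (π.injective h) (Fin.ne_of_lt hij))
    have hkj' : π k < π j := lt_of_le_of_ne hjk' (by
      intro h; exact absurd (π.injective h) (Fin.ne_of_gt hjk))
    rcases lt_or_gt_of_ne (show π i ≠ π k by
      intro h; exact absurd (π.injective h) (Fin.ne_of_lt (hij.trans hjk))) with h | h
    · exact h1 ⟨![i, j, k], vec3_strictMono hij hjk,
        vec3_rel π i j k ![1,3,2]
          (iff_of_true (by norm_num) hij') (iff_of_false (by norm_num) (asymm hij'))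
          (iff_of_true (by decide) h) (iff_of_false (by decide) (asymm h))
          (iff_of_false (by decide) (not_lt.mpr hkj'.le)) (iff_of_true (by decide) hkj')⟩
    · exact h2 ⟨![i, j, k], vec3_strictMono hij hjk,
        vec3_rel π i j k ![2,3,1]
          (iff_of_true (by norm_num) hij') (iff_of_false (by norm_num) (asymm hij'))
          (iff_of_false (by decide) (not_lt.mpr h.le)) (iff_of_true (by decide) h)
          (iff_of_false (by decide) (not_lt.mpr hkj'.le)) (iff_of_true (by decide) hkj')⟩
  · intro h
    constructor
    · rintro ⟨f, hf, hrel⟩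
      have h01 : π (f 0) < π (f 1) := (hrel 0 1).mp (by norm_num)
      have h21 : π (f 2) < π (f 1) := (hrel 2 1).mp (by decide)
      rcases h (f 0) (f 1) (f 2) (hf (by decide)) (hf (by decide)) with h' | h'
      · exact absurd h01 (not_lt.mpr h'.le)
      · exact absurd h21 (not_lt.mpr h'.le)
    · rintro ⟨f, hf, hrel⟩
      have h01 : π (f 0) < π (f 1) := (hrel 0 1).mp (by norm_num)
      have h21 : π (f 2) < π (f 1) := (hrel 2 1).mp (by decide)
      rcases h (f 0) (f 1) (f 2) (hf (by decide)) (hf (by decide)) with h' | h'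
      · exact absurd h01 (not_lt.mpr h'.le)
      · exact absurd h21 (not_lt.mpr h'.le)

section Construction
variable {m : ℕ}

def lft (b : Fin m → Bool) : Fin (m + 1) → Bool :=
  Fin.cases false b

@[simp] lemma lft_zero (b : Fin m → Bool) : lft b 0 = false := rfl
@[simp] lemma lft_succ (b : Fin m → Bool) (u : Fin m) : lft b u.succ = b u := by
  simp [lft]

def Lcard (b : Fin m → Bool) : ℕ :=
  (Finset.univ.filter fun v : Fin (m + 1) => lft b v = true).card

def posF (b : Fin m → Bool) (v : Fin (m + 1)) : ℕ :=
  if lft b v = true then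
    (Finset.univ.filter fun w : Fin (m + 1) => lft b w = true ∧ v < w).card
  else
    Lcard b + (Finset.univ.filter fun w : Fin (m + 1) => lft b w = false ∧ w < v).card

lemma posF_of_left {b : Fin m → Bool} {v : Fin (m + 1)} (hv : lft b v = true) :
    posF b v = (Finset.univ.filter fun w : Fin (m + 1) => lft b w = true ∧ v < w).card := by
  rw [posF, if_pos hv]

lemma posF_of_right {b : Fin m → Bool} {v : Fin (m + 1)} (hv : lft b v = false) :
    posF b v
      = Lcard b + (Finset.univ.filter fun w : Fin (m + 1) => lft b w = false ∧ w < v).card := by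
  rw [posF, if_neg (by simp [hv])]

lemma posF_lt_of_left {b : Fin m → Bool} {v : Fin (m + 1)} (hv : lft b v = true) :
    posF b v < Lcard b := by
  rw [posF_of_left hv]
  apply Finset.card_lt_card
  constructor
  · intro w hw
    simp only [Finset.mem_filter] at hw ⊢
    exact ⟨hw.1, hw.2.1⟩
  · intro hsub
    have := hsub (by simp [hv] : v ∈ Finset.univ.filter fun w : Fin (m+1) => lft b w = true)
    simp at this

lemma le_posF_of_right {b : Fin m → Bool} {v : Fin (m + 1)} (hv : lft b v = false) :
    Lcard b ≤ posF b v := by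
  rw [posF_of_right hv]
  exact Nat.le_add_right _ _

lemma posF_lt (b : Fin m → Bool) (v : Fin (m + 1)) : posF b v < m + 1 := by
  cases hv : lft b v
  · rw [posF_of_right hv]
    have hsplit := Finset.card_filter_add_card_filter_not
      (s := (Finset.univ : Finset (Fin (m+1)))) (p := fun w => lft b w = true)
    have hcard : Lcard b + (Finset.univ.filter fun w : Fin (m+1) => ¬ (lft b w = true)).card
        = m + 1 := by
      simpa [Lcard] using hsplit
    have hlt : (Finset.univ.filter fun w : Fin (m + 1) => lft b w = false ∧ w < v).card
        < (Finset.univ.filter fun w : Fin (m+1) => ¬ (lft b w = true)).card := by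
      apply Finset.card_lt_card
      constructor
      · intro w hw
        simp only [Finset.mem_filter] at hw ⊢
        exact ⟨hw.1, by simp [hw.2.1]⟩
      · intro hsub
        have := hsub (by simp [hv] :
          v ∈ Finset.univ.filter fun w : Fin (m+1) => ¬ (lft b w = true))
        simp at this
    omega
  · have h1 := posF_lt_of_left hv
    have h2 : Lcard b ≤ m + 1 := by
      simpa [Lcard] using Finset.card_le_univ
        (Finset.univ.filter fun v : Fin (m + 1) => lft b v = true)
    omega

lemma posF_anti {b : Fin m → Bool} {x y : Fin (m + 1)} (hx : lft b x = true)
    (hy : lft b y = true) (hxy : x < y) : posF b y < posF b x := by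
  rw [posF_of_left hx, posF_of_left hy]
  apply Finset.card_lt_card
  constructor
  · intro w hw
    simp only [Finset.mem_filter] at hw ⊢
    exact ⟨hw.1, hw.2.1, hxy.trans hw.2.2⟩
  · intro hsub
    have := hsub (by simp [hy, hxy] :
      y ∈ Finset.univ.filter fun w : Fin (m+1) => lft b w = true ∧ x < w)
    simp at this

lemma posF_mono {b : Fin m → Bool} {x y : Fin (m + 1)} (hx : lft b x = false)
    (hy : lft b y = false) (hxy : x < y) : posF b x < posF b y := by
  rw [posF_of_right hx, posF_of_right hy]
  have : (Finset.univ.filter fun w : Fin (m + 1) => lft b w = false ∧ w < x).card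
      < (Finset.univ.filter fun w : Fin (m + 1) => lft b w = false ∧ w < y).card := by
    apply Finset.card_lt_card
    constructor
    · intro w hw
      simp only [Finset.mem_filter] at hw ⊢
      exact ⟨hw.1, hw.2.1, hw.2.2.trans hxy⟩
    · intro hsub
      have := hsub (by simp [hx, hxy] :
        x ∈ Finset.univ.filter fun w : Fin (m+1) => lft b w = false ∧ w < y)
      simp at this
  omega

lemma posF_cross {b : Fin m → Bool} {x y : Fin (m + 1)} (hx : lft b x = true)
    (hy : lft b y = false) : posF b x < posF b y :=
  lt_of_lt_of_le (posF_lt_of_left hx) (le_posF_of_right hy)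

lemma posF_injective (b : Fin m → Bool) : Function.Injective (posF b) := by
  intro x y hxy
  by_contra hne
  rcases lt_or_gt_of_ne hne with h | h <;>
    cases hx : lft b x <;> cases hy : lft b y
  · exact absurd hxy (Nat.ne_of_lt (posF_mono hx hy h))
  · exact absurd hxy (Nat.ne_of_gt (posF_cross hy hx))
  · exact absurd hxy (Nat.ne_of_lt (posF_cross hx hy))
  · exact absurd hxy (Nat.ne_of_gt (posF_anti hx hy h))
  · exact absurd hxy (Nat.ne_of_gt (posF_mono hy hx h))
  · exact absurd hxy (Nat.ne_of_gt (posF_cross hy hx))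
  · exact absurd hxy (Nat.ne_of_lt (posF_cross hx hy))
  · exact absurd hxy (Nat.ne_of_lt (posF_anti hy hx h))

def posE (b : Fin m → Bool) : Fin (m + 1) → Fin (m + 1) :=
  fun v => ⟨posF b v, posF_lt b v⟩

lemma posE_injective (b : Fin m → Bool) : Function.Injective (posE b) := by
  intro x y h
  exact posF_injective b (congrArg Fin.val h)

noncomputable def permOf (b : Fin m → Bool) : Equiv.Perm (Fin (m + 1)) :=
  (Equiv.ofBijective (posE b) (Finite.injective_iff_bijective.mp (posE_injective b))).symm

@[simp] lemma permOf_symm_apply (b : Fin m → Bool) (v : Fin (m + 1)) :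
    (permOf b).symm v = posE b v := rfl



section Construction2
variable {m : ℕ}


lemma noPeak_permOf (b : Fin m → Bool) : NoPeak (permOf b) := by
  intro i j k hij hjk
  by_contra hc
  push_neg at hc
  obtain ⟨hji, hjk'⟩ := hc
  set x := permOf b i with hxdef
  set y := permOf b j with hydef
  set z := permOf b k with hzdef
  have hix : i = posE b x := by rw [hxdef, ← permOf_symm_apply, Equiv.symm_apply_apply]
  have hjy : j = posE b y := by rw [hydef, ← permOf_symm_apply, Equiv.symm_apply_apply]
  have hkz : k = posE b z := by rw [hzdef, ← permOf_symm_apply, Equiv.symm_apply_apply]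
  have hxy : posF b x < posF b y := by
    have := hij; rw [hix, hjy] at this; exact this
  have hyz : posF b y < posF b z := by
    have := hjk; rw [hjy, hkz] at this; exact this
  have hxv : x < y := lt_of_le_of_ne hji (by
    intro hh; rw [hh] at hxy; exact lt_irrefl _ hxy)
  have hzv : z < y := lt_of_le_of_ne hjk' (by
    intro hh; rw [hh] at hyz; exact lt_irrefl _ hyz)
  cases hy : lft b y
  · cases hz : lft b z
    · exact absurd hyz (not_lt.mpr (posF_mono hz hy hzv).le)
    · exact absurd hyz (not_lt.mpr (posF_cross hz hy).le)
  · cases hx : lft b x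
    · exact absurd hxy (not_lt.mpr (posF_cross hy hx).le)
    · exact absurd hxy (not_lt.mpr (posF_anti hx hy hxv).le)

def Bmap (π : Equiv.Perm (Fin (m + 1))) : Fin m → Bool :=
  fun u => decide (π.symm u.succ < π.symm 0)

lemma lft_Bmap (π : Equiv.Perm (Fin (m + 1))) (v : Fin (m + 1)) :
    lft (Bmap π) v = decide (π.symm v < π.symm 0) := by
  induction v using Fin.cases with
  | zero => simp
  | succ u => simp [Bmap]

lemma posF_zero (b : Fin m → Bool) : posF b 0 = Lcard b := by
  rw [posF_of_right (lft_zero b)]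
  have : (Finset.univ.filter fun w : Fin (m + 1) => lft b w = false ∧ w < 0) = ∅ := by
    apply Finset.filter_false_of_mem
    intro w _
    simp [Fin.not_lt_zero]
  simp [this]

lemma Bmap_permOf (b : Fin m → Bool) : Bmap (permOf b) = b := by
  funext u
  have hz : posF b 0 = Lcard b := posF_zero b
  rw [Bmap, permOf_symm_apply, permOf_symm_apply]
  have hlt : (posE b u.succ < posE b 0) ↔ posF b u.succ < Lcard b := by
    rw [Fin.lt_def]; simp [posE, hz]
  cases hb : b u
  · have hl : lft b u.succ = false := by simp [hb]
    have := le_posF_of_right hl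
    simp only [decide_eq_false_iff_not]
    rw [hlt]
    omega
  · have hl : lft b u.succ = true := by simp [hb]
    have := posF_lt_of_left hl
    simp only [decide_eq_true_eq]
    rw [hlt]
    omega

lemma noPeak_A {π : Equiv.Perm (Fin (m + 1))} (h : NoPeak π) {x y : Fin (m + 1)}
    (h1 : π.symm x < π.symm y) (h2 : π.symm y ≤ π.symm 0) : y < x := by
  rcases lt_or_eq_of_le h2 with h2' | h2'
  · have := h (π.symm x) (π.symm y) (π.symm 0) h1 h2'
    simp only [Equiv.apply_symm_apply] at this
    rcases this with h' | h'
    · exact h'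
    · exact absurd h' (Fin.not_lt_zero y)
  · have hy0 : y = 0 := π.symm.injective h2'
    subst hy0
    refine Fin.pos_of_ne_zero ?_
    intro hx0
    rw [hx0] at h1
    exact lt_irrefl _ h1

lemma noPeak_B {π : Equiv.Perm (Fin (m + 1))} (h : NoPeak π) {x y : Fin (m + 1)}
    (h1 : π.symm 0 ≤ π.symm x) (h2 : π.symm x < π.symm y) : x < y := by
  rcases lt_or_eq_of_le h1 with h1' | h1'
  · have := h (π.symm 0) (π.symm x) (π.symm y) h1' h2
    simp only [Equiv.apply_symm_apply] at this
    rcases this with h' | h'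
    · exact absurd h' (Fin.not_lt_zero x)
    · exact h'
  · have hx0 : x = 0 := π.symm.injective h1'.symm
    subst hx0
    refine Fin.pos_of_ne_zero ?_
    intro hy0
    rw [hy0] at h2
    exact lt_irrefl _ h2

lemma card_val (q : Equiv.Perm (Fin (m + 1))) (v : Fin (m + 1)) :
    (Finset.univ.filter fun w : Fin (m + 1) => q w < q v).card = (q v : ℕ) := by
  have h1 : (Finset.univ.filter fun w : Fin (m + 1) => q w < q v).card
      = (Finset.univ.filter fun w : Fin (m + 1) => w < q v).card := by
    apply Finset.card_equiv q
    intro i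
    simp
  rw [h1]
  have h2 : (Finset.univ.filter fun w : Fin (m + 1) => w < q v) = Finset.Iio (q v) := by
    ext w; simp
  rw [h2, Fin.card_Iio]


end Construction2


section Main
variable {m : ℕ}

lemma posF_Bmap {π : Equiv.Perm (Fin (m + 1))} (h : NoPeak π) (v : Fin (m + 1)) :
    posF (Bmap π) v = (π.symm v : ℕ) := by
  set q := π.symm with hq
  cases hv : lft (Bmap π) v
  · -- right case : ¬ (q v < q 0)
    have hv' : ¬ (q v < q 0) := by
      rw [lft_Bmap] at hv; simpa using hv
    have hv0 : q 0 ≤ q v := not_lt.mp hv'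
    rw [posF_of_right hv]
    have hL : Lcard (Bmap π)
        = (Finset.univ.filter fun w : Fin (m + 1) => q w < q 0).card := by
      unfold Lcard
      congr 1
      ext w
      simp [lft_Bmap, hq]
    have hR : (Finset.univ.filter fun w : Fin (m + 1) => lft (Bmap π) w = false ∧ w < v)
        = (Finset.univ.filter fun w : Fin (m + 1) => ¬ (q w < q 0) ∧ w < v) := by
      ext w
      simp [lft_Bmap, hq]
    rw [hL, hR]
    -- split the count of {w | q w < q v}
    have hsplit := Finset.card_filter_add_card_filter_not
      (s := Finset.univ.filter fun w : Fin (m + 1) => q w < q v)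
      (p := fun w => q w < q 0)
    have e1 : ((Finset.univ.filter fun w : Fin (m + 1) => q w < q v).filter
          fun w => q w < q 0)
        = (Finset.univ.filter fun w : Fin (m + 1) => q w < q 0) := by
      rw [Finset.filter_filter]
      ext w
      simp only [Finset.mem_filter, Finset.mem_univ, true_and]
      constructor
      · exact fun hw => hw.2
      · exact fun hw => ⟨lt_of_lt_of_le hw hv0, hw⟩
    have e2 : ((Finset.univ.filter fun w : Fin (m + 1) => q w < q v).filter
          fun w => ¬ (q w < q 0))
        = (Finset.univ.filter fun w : Fin (m + 1) => ¬ (q w < q 0) ∧ w < v) := by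
      rw [Finset.filter_filter]
      ext w
      simp only [Finset.mem_filter, Finset.mem_univ, true_and]
      constructor
      · rintro ⟨hw1, hw2⟩
        exact ⟨hw2, noPeak_B h (not_lt.mp hw2) hw1⟩
      · rintro ⟨hw1, hw2⟩
        refine ⟨?_, hw1⟩
        rcases lt_trichotomy (q w) (q v) with h' | h' | h'
        · exact h'
        · exact absurd (q.injective h') (Fin.ne_of_lt hw2)
        · exact absurd (noPeak_B h hv0 h') (not_lt.mpr hw2.le)
    rw [e1, e2] at hsplit
    rw [← card_val q v, ← hsplit]
  · -- left case : q v < q 0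
    have hv' : q v < q 0 := by
      rw [lft_Bmap] at hv; simpa using hv
    rw [posF_of_left hv]
    have hset : (Finset.univ.filter fun w : Fin (m + 1) => lft (Bmap π) w = true ∧ v < w)
        = (Finset.univ.filter fun w : Fin (m + 1) => q w < q v) := by
      ext w
      simp only [Finset.mem_filter, lft_Bmap, decide_eq_true_eq, true_and,
        Finset.mem_univ]
      constructor
      · rintro ⟨hw0, hvw⟩
        rcases lt_trichotomy (q w) (q v) with h' | h' | h'
        · exact h'
        · exact absurd (q.injective h') (Fin.ne_of_lt hvw).symm
        · exact absurd (noPeak_A h h' hw0.le) (not_lt.mpr hvw.le)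
      · intro hw
        exact ⟨hw.trans hv', noPeak_A h hw hv'.le⟩
    rw [hset, card_val]

end Main

lemma permOf_Bmap {m : ℕ} {π : Equiv.Perm (Fin (m + 1))} (h : NoPeak π) :
    permOf (Bmap π) = π := by
  have hsymm : (permOf (Bmap π)).symm = π.symm := by
    apply Equiv.ext
    intro v
    rw [permOf_symm_apply]
    exact Fin.ext (posF_Bmap h v)
  calc permOf (Bmap π) = ((permOf (Bmap π)).symm).symm := (Equiv.symm_symm _).symm
    _ = (π.symm).symm := by rw [hsymm]
    _ = π := Equiv.symm_symm _

noncomputable def noPeakEquiv (m : ℕ) :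
    {π : Equiv.Perm (Fin (m + 1)) // NoPeak π} ≃ (Fin m → Bool) where
  toFun p := Bmap p.1
  invFun b := ⟨permOf b, noPeak_permOf b⟩
  left_inv p := Subtype.ext (permOf_Bmap p.2)
  right_inv b := Bmap_permOf b

/-- For `n ≥ 1`, `|Av_n(132, 231)| = 2^(n-1)`. -/
theorem stmt4 (n : ℕ) (hn : 1 ≤ n) :
    Nat.card {π : Equiv.Perm (Fin n) // PAvoids π ![1, 3, 2] ∧ PAvoids π ![2, 3, 1]}
      = 2 ^ (n - 1) := by
  obtain ⟨m, rfl⟩ : ∃ m, n = m + 1 := ⟨n - 1, by omega⟩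
  have e1 : {π : Equiv.Perm (Fin (m + 1)) // PAvoids π ![1, 3, 2] ∧ PAvoids π ![2, 3, 1]}
      ≃ {π : Equiv.Perm (Fin (m + 1)) // NoPeak π} :=
    Equiv.subtypeEquivRight fun π => avoid_iff π
  rw [Nat.card_congr (e1.trans (noPeakEquiv m))]
  simp [Nat.card_fun, Nat.card_eq_fintype_card]
end Construction
end

section
/- For integers a ≥ b ≥ 0, the number of standard Young tableaux of two-row shape (a, b) equals C(a+b, b) − C(a+b, b−1), where C denotes the binomial coefficient (with C(m, −1) = 0). -/
/-- A standard Young tableau of two-row shape `(a, b)` (bottom row of length `a`, top row of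
length `b`, left-justified): rows increase left-to-right, columns increase bottom-to-top,
and the entries are exactly `1, …, a+b`. -/
structure SYT2 (a b : ℕ) where
  bot : Fin a → ℕ
  top : Fin b → ℕ
  bot_mono : StrictMono bot
  top_mono : StrictMono top
  col : ∀ i : Fin b, ∀ h : (i : ℕ) < a, bot ⟨i, h⟩ < top i
  mem : ∀ x : Fin a ⊕ Fin b, Sum.elim bot top x ∈ Finset.Icc 1 (a + b)
  inj : Function.Injective (Sum.elim bot top)


open Finset

def ballotSet (n b : ℕ) : Finset (Finset ℕ) :=
  @Finset.filter _ (fun S => ∀ k ∈ Finset.Icc 1 n, 2 * (S.filter (· ≤ k)).card ≤ k)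
    (fun _ => by infer_instance) ((Finset.Icc 1 n).powersetCard b)

lemma mem_ballotSet {n b : ℕ} {S : Finset ℕ} :
    S ∈ ballotSet n b ↔ S ⊆ Finset.Icc 1 n ∧ S.card = b ∧
      ∀ k, 2 * (S.filter (· ≤ k)).card ≤ k := by
  constructor
  · intro h
    rw [ballotSet, mem_filter, mem_powersetCard] at h
    obtain ⟨⟨hsub, hcard⟩, hball⟩ := h
    refine ⟨hsub, hcard, fun k => ?_⟩
    rcases Nat.lt_or_ge k 1 with hk | hk
    · have hk0 : k = 0 := by omega
      subst hk0
      have : S.filter (· ≤ 0) = ∅ := by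
        rw [filter_eq_empty_iff]
        intro x hx
        have := hsub hx; simp only [Finset.mem_Icc] at this; omega
      rw [this]; simp
    rcases Nat.lt_or_ge n k with hk2 | hk2
    case inr => exact hball k (by simp only [Finset.mem_Icc]; omega)
    · have hS : S.filter (· ≤ k) = S := filter_eq_self.2 (fun x hx => by
        have := hsub hx; simp only [Finset.mem_Icc] at this; omega)
      rw [hS, hcard]
      rcases Nat.eq_zero_or_pos n with rfl | hn
      · have hse : S = ∅ := subset_empty.1 (by simpa using hsub)
        subst hse; simp at hcard; omega
      · have h2 := hball n (by simp only [Finset.mem_Icc]; omega)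
        have hS2 : S.filter (· ≤ n) = S := filter_eq_self.2 (fun x hx => by
          have := hsub hx; simp only [Finset.mem_Icc] at this; omega)
        rw [hS2, hcard] at h2; omega
  · rintro ⟨hsub, hcard, hball⟩
    rw [ballotSet, mem_filter, mem_powersetCard]
    exact ⟨⟨hsub, hcard⟩, fun k _ => hball k⟩

lemma ballot_empty {m b : ℕ} (hb : 1 ≤ b) (h : m < 2 * b) : ballotSet m b = ∅ := by
  rw [eq_empty_iff_forall_notMem]
  intro S hS
  rw [mem_ballotSet] at hS
  obtain ⟨hsub, hcard, hball⟩ := hS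
  have hS2 : S.filter (· ≤ m) = S := filter_eq_self.2 (fun x hx => by
    have := hsub hx; simp only [Finset.mem_Icc] at this; omega)
  have := hball m
  rw [hS2, hcard] at this; omega

lemma ballot_zero (n : ℕ) : (ballotSet n 0).card = 1 := by
  have : ballotSet n 0 = {∅} := by
    ext S
    rw [mem_ballotSet]
    simp only [Finset.card_eq_zero, mem_singleton]
    constructor
    · rintro ⟨-, h, -⟩; exact h
    · rintro rfl; simp
  rw [this, card_singleton]

lemma ballot_rec {n b : ℕ} (hb : 1 ≤ b) (h2 : 2 * b ≤ n + 1) :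
    (ballotSet (n + 1) b).card = (ballotSet n b).card + (ballotSet n (b - 1)).card := by
  have hnotin : ∀ S ∈ ballotSet n b, n + 1 ∉ S := by
    intro S hS h
    have := (mem_ballotSet.1 hS).1 h
    simp only [Finset.mem_Icc] at this; omega
  have hnotin' : ∀ S ∈ ballotSet n (b - 1), n + 1 ∉ S := by
    intro S hS h
    have := (mem_ballotSet.1 hS).1 h
    simp only [Finset.mem_Icc] at this; omega
  have key : ballotSet (n + 1) b
      = (ballotSet n b) ∪ ((ballotSet n (b - 1)).image (insert (n + 1))) := by
    ext S
    rw [mem_ballotSet]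
    constructor
    · rintro ⟨hsub, hcard, hball⟩
      by_cases hn : n + 1 ∈ S
      · refine mem_union_right _ (mem_image.2 ⟨S.erase (n + 1), ?_, ?_⟩)
        · rw [mem_ballotSet]
          refine ⟨fun x hx => ?_, ?_, fun k => ?_⟩
          · obtain ⟨hx1, hx2⟩ := Finset.mem_erase.1 hx
            have := hsub hx2; simp only [Finset.mem_Icc] at this ⊢; omega
          · rw [Finset.card_erase_of_mem hn, hcard]
          · calc 2 * ((S.erase (n+1)).filter (· ≤ k)).card
                ≤ 2 * (S.filter (· ≤ k)).card := by
                  have : (S.erase (n+1)).filter (· ≤ k) ⊆ S.filter (· ≤ k) :=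
                    filter_subset_filter _ (erase_subset _ _)
                  exact Nat.mul_le_mul_left 2 (card_le_card this)
              _ ≤ k := hball k
        · rw [Finset.insert_erase hn]
      · refine mem_union_left _ ?_
        rw [mem_ballotSet]
        refine ⟨fun x hx => ?_, hcard, hball⟩
        have := hsub hx; simp only [Finset.mem_Icc] at this ⊢
        rcases this with ⟨h1, hle⟩
        exact ⟨h1, by rcases Nat.lt_or_ge x (n+1) with h|h; omega; · exfalso; exact hn (by
          have : x = n + 1 := by omega
          rwa [this] at hx)⟩
    · intro h
      rcases mem_union.1 h with h | h
      · obtain ⟨hsub, hcard, hball⟩ := mem_ballotSet.1 h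
        exact ⟨hsub.trans (Finset.Icc_subset_Icc_right (by omega)), hcard, hball⟩
      · obtain ⟨S', hS', rfl⟩ := mem_image.1 h
        obtain ⟨hsub, hcard, hball⟩ := mem_ballotSet.1 hS'
        have hni : n + 1 ∉ S' := hnotin' S' hS'
        refine ⟨?_, ?_, fun k => ?_⟩
        · intro x hx
          rcases Finset.mem_insert.1 hx with rfl | hx
          · simp only [Finset.mem_Icc]; omega
          · exact Finset.Icc_subset_Icc_right (by omega) (hsub hx)
        · rw [Finset.card_insert_of_notMem hni, hcard]; omega
        · rw [Finset.filter_insert]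
          split_ifs with hk
          · -- n + 1 ≤ k
            have hfs : S'.filter (· ≤ k) = S' := filter_eq_self.2 (fun x hx => by
              have := hsub hx; simp only [Finset.mem_Icc] at this; omega)
            rw [hfs, Finset.card_insert_of_notMem hni, hcard]
            omega
          · exact hball k
  rw [key, card_union_of_disjoint, Finset.card_image_of_injOn]
  · intro S1 h1 S2 h2 he
    have := hnotin' S1 h1
    have := hnotin' S2 h2
    rw [← Finset.erase_insert (hnotin' S1 h1), ← Finset.erase_insert (hnotin' S2 h2), he]
  · rw [Finset.disjoint_left]
    intro S hS hS2
    obtain ⟨S', hS', rfl⟩ := mem_image.1 hS2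
    exact hnotin _ hS (Finset.mem_insert_self _ _)

lemma ballot_card : ∀ n b : ℕ, 2 * b ≤ n →
    (ballotSet n b).card + (if b = 0 then 0 else Nat.choose n (b - 1)) = Nat.choose n b := by
  intro n
  induction n with
  | zero =>
    intro b hb
    have hb0 : b = 0 := by omega
    subst hb0
    simp [ballot_zero]
  | succ n ih =>
    intro b hb
    rcases Nat.eq_zero_or_pos b with rfl | hbpos
    · simp [ballot_zero]
    have hrec := ballot_rec (n := n) hbpos (by omega)
    rw [hrec, if_neg (by omega : ¬ b = 0)]
    rcases Nat.lt_or_ge (2 * b) (n + 1) with hcase | hcase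
    · -- 2b ≤ n
      rcases Nat.eq_or_lt_of_le hbpos with hb1 | hb2
      · -- b = 1
        have hb1 : b = 1 := hb1.symm
        subst hb1
        have h1 := ih 1 (by omega)
        rw [if_neg (by omega : ¬ (1:ℕ) = 0)] at h1
        have h0 := ballot_zero n
        have p1 : (n+1).choose 1 = n.choose 0 + n.choose 1 := Nat.choose_succ_succ n 0
        simp only [show (1:ℕ) - 1 = 0 from rfl, Nat.choose_zero_right] at *
        omega
      · -- b ≥ 2
        obtain ⟨c, rfl⟩ : ∃ c, b = c + 2 := ⟨b - 2, by omega⟩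
        have h1 := ih (c+2) (by omega)
        have h2 := ih (c+1) (by omega)
        rw [if_neg (by omega : ¬ c + 2 = 0)] at h1
        rw [if_neg (by omega : ¬ c + 1 = 0)] at h2
        have p1 : (n+1).choose (c+2) = n.choose (c+1) + n.choose (c+2) := Nat.choose_succ_succ n (c+1)
        have p2 : (n+1).choose (c+1) = n.choose c + n.choose (c+1) := Nat.choose_succ_succ n c
        simp only [show c + 2 - 1 = c + 1 from rfl, show c + 1 - 1 = c from rfl] at *
        omega
    · -- 2b = n + 1
      have hn : n + 1 = 2 * b := by omega
      have hzero : (ballotSet n b).card = 0 := by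
        rw [ballot_empty hbpos (by omega)]; simp
      have hsym : n.choose b = n.choose (b - 1) := by
        have hx : n = 2 * (b-1) + 1 := by omega
        rw [hx, show b = (b-1) + 1 by omega]
        exact Nat.choose_symm_half (b-1)
      rcases Nat.eq_or_lt_of_le hbpos with hb1 | hb2
      · have hb1 : b = 1 := hb1.symm
        subst hb1
        have hn1 : n = 1 := by omega
        subst hn1
        have h0 := ballot_zero 1
        simp only [show (1:ℕ) - 1 = 0 from rfl] at *
        simp only [Nat.choose_zero_right, Nat.choose_one_right] at *
        omega
      · obtain ⟨c, rfl⟩ : ∃ c, b = c + 2 := ⟨b - 2, by omega⟩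
        have h2 := ih (c+1) (by omega)
        rw [if_neg (by omega : ¬ c + 1 = 0)] at h2
        have p1 : (n+1).choose (c+2) = n.choose (c+1) + n.choose (c+2) := Nat.choose_succ_succ n (c+1)
        have p2 : (n+1).choose (c+1) = n.choose c + n.choose (c+1) := Nat.choose_succ_succ n c
        simp only [show c + 2 - 1 = c + 1 from rfl, show c + 1 - 1 = c from rfl] at *
        omega

lemma orderEmb_le_of_card_filter {T : Finset ℕ} {a : ℕ} (hT : T.card = a) (i : Fin a) (v : ℕ)
    (h : (i : ℕ) + 1 ≤ (T.filter (· ≤ v)).card) : T.orderEmbOfFin hT i ≤ v := by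
  by_contra hlt
  push_neg at hlt
  have hsub : T.filter (· ≤ v) ⊆ (Finset.Iio i).image (T.orderEmbOfFin hT) := by
    intro x hx
    obtain ⟨hxT, hxv⟩ := Finset.mem_filter.1 hx
    have hx2 : x ∈ Set.range (T.orderEmbOfFin hT) := by
      rw [Finset.range_orderEmbOfFin]; exact hxT
    obtain ⟨j, rfl⟩ := hx2
    refine Finset.mem_image.2 ⟨j, ?_, rfl⟩
    rw [Finset.mem_Iio]
    exact (T.orderEmbOfFin hT).strictMono.lt_iff_lt.1 (lt_of_le_of_lt hxv hlt)
  have h1 := Finset.card_le_card hsub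
  have h2 : ((Finset.Iio i).image (T.orderEmbOfFin hT)).card ≤ (i : ℕ) := by
    calc ((Finset.Iio i).image (T.orderEmbOfFin hT)).card ≤ (Finset.Iio i).card :=
          Finset.card_image_le
    _ = (i : ℕ) := Fin.card_Iio i
  omega

lemma topImage_mem {a b : ℕ} (hab : b ≤ a) (t : SYT2 a b) :
    Finset.image t.top Finset.univ ∈ ballotSet (a + b) b := by
  rw [mem_ballotSet]
  refine ⟨?_, ?_, ?_⟩
  · intro x hx
    obtain ⟨i, -, rfl⟩ := Finset.mem_image.1 hx
    exact t.mem (Sum.inr i)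
  · rw [Finset.card_image_of_injective _ t.top_mono.injective, Finset.card_univ,
      Fintype.card_fin]
  · intro k
    set A : Finset (Fin b) := Finset.univ.filter (fun i => t.top i ≤ k) with hA
    set B : Finset (Fin a) := Finset.univ.filter (fun j => t.bot j ≤ k) with hB
    have him : (Finset.image t.top Finset.univ).filter (· ≤ k) = A.image t.top := by
      ext x
      simp only [hA, Finset.mem_filter, Finset.mem_image, Finset.mem_univ, true_and]
      constructor
      · rintro ⟨⟨i, rfl⟩, hx⟩; exact ⟨i, hx, rfl⟩
      · rintro ⟨i, hi, rfl⟩; exact ⟨⟨i, rfl⟩, hi⟩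
    have hcardA : ((Finset.image t.top Finset.univ).filter (· ≤ k)).card = A.card := by
      rw [him, Finset.card_image_of_injective _ t.top_mono.injective]
    have hAB : A.card ≤ B.card := by
      refine Finset.card_le_card_of_injOn (fun i => ⟨(i : ℕ), lt_of_lt_of_le i.2 hab⟩) ?_ ?_
      · intro i hi
        simp only [hA, hB, Finset.mem_coe, Finset.mem_filter, Finset.mem_univ, true_and] at hi ⊢
        exact le_trans (le_of_lt (t.col i (lt_of_lt_of_le i.2 hab))) hi
      · intro i _ j _ hij
        have h2 : (i : ℕ) = (j : ℕ) := by simpa using congrArg Fin.val hij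
        exact Fin.ext h2
    have hdisj : Disjoint (A.image t.top) (B.image t.bot) := by
      rw [Finset.disjoint_left]
      rintro x hx1 hx2
      obtain ⟨i, -, rfl⟩ := Finset.mem_image.1 hx1
      obtain ⟨j, -, hj⟩ := Finset.mem_image.1 hx2
      have h2 := t.inj (a₁ := Sum.inl j) (a₂ := Sum.inr i) (by simpa using hj)
      simp at h2
    have hunion : (A.image t.top ∪ B.image t.bot) ⊆ Finset.Icc 1 k := by
      intro x hx
      rcases Finset.mem_union.1 hx with hx | hx
      · obtain ⟨i, hi, rfl⟩ := Finset.mem_image.1 hx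
        have h1 := t.mem (Sum.inr i)
        simp only [Sum.elim_inr, Finset.mem_Icc] at h1
        simp only [hA, Finset.mem_filter] at hi
        exact Finset.mem_Icc.2 ⟨h1.1, hi.2⟩
      · obtain ⟨j, hj, rfl⟩ := Finset.mem_image.1 hx
        have h1 := t.mem (Sum.inl j)
        simp only [Sum.elim_inl, Finset.mem_Icc] at h1
        simp only [hB, Finset.mem_filter] at hj
        exact Finset.mem_Icc.2 ⟨h1.1, hj.2⟩
    have hcards : A.card + B.card ≤ k := by
      have h1 := Finset.card_le_card hunion
      rw [Finset.card_union_of_disjoint hdisj,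
        Finset.card_image_of_injective _ t.top_mono.injective,
        Finset.card_image_of_injective _ t.bot_mono.injective, Nat.card_Icc] at h1
      omega
    rw [hcardA]; omega

lemma botImage {a b : ℕ} (t : SYT2 a b) :
    Finset.image t.bot Finset.univ = Finset.Icc 1 (a + b) \ Finset.image t.top Finset.univ := by
  have hsub : Finset.image t.bot Finset.univ
      ⊆ Finset.Icc 1 (a + b) \ Finset.image t.top Finset.univ := by
    intro x hx
    obtain ⟨j, -, rfl⟩ := Finset.mem_image.1 hx
    rw [Finset.mem_sdiff]
    refine ⟨t.mem (Sum.inl j), ?_⟩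
    intro hx2
    obtain ⟨i, -, hi⟩ := Finset.mem_image.1 hx2
    have h2 := t.inj (a₁ := Sum.inr i) (a₂ := Sum.inl j) (by simpa using hi)
    simp at h2
  have h1 : (Finset.image t.bot Finset.univ).card = a := by
    rw [Finset.card_image_of_injective _ t.bot_mono.injective, Finset.card_univ,
      Fintype.card_fin]
  have h2 : (Finset.Icc 1 (a + b) \ Finset.image t.top Finset.univ).card = a := by
    rw [Finset.card_sdiff_of_subset (by
      intro x hx
      obtain ⟨i, -, rfl⟩ := Finset.mem_image.1 hx
      exact t.mem (Sum.inr i)), Nat.card_Icc,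
      Finset.card_image_of_injective _ t.top_mono.injective, Finset.card_univ,
      Fintype.card_fin]
    omega
  exact Finset.eq_of_subset_of_card_le hsub (by rw [h1, h2])

lemma SYT2.ext' {a b : ℕ} {t1 t2 : SYT2 a b} (h1 : t1.bot = t2.bot) (h2 : t1.top = t2.top) :
    t1 = t2 := by
  obtain ⟨b1, p1, _, _, _, _, _⟩ := t1
  obtain ⟨b2, p2, _, _, _, _, _⟩ := t2
  dsimp only at h1 h2
  subst h1; subst h2
  rfl

lemma image_orderEmbOfFin (U : Finset ℕ) (k : ℕ) (hU : U.card = k) :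
    Finset.image (fun i => U.orderEmbOfFin hU i) Finset.univ = U := by
  ext x
  simp only [Finset.mem_image, Finset.mem_univ, true_and]
  constructor
  · rintro ⟨i, rfl⟩; exact Finset.orderEmbOfFin_mem U hU i
  · intro hx
    have hx2 : x ∈ Set.range (U.orderEmbOfFin hU) := by
      rw [Finset.range_orderEmbOfFin]; exact hx
    obtain ⟨i, hi⟩ := hx2
    exact ⟨i, hi⟩

lemma syt_card_eq (a b : ℕ) (hab : b ≤ a) :
    Nat.card (SYT2 a b) = (ballotSet (a + b) b).card := by
  have hbij : Function.Bijective
      (fun t : SYT2 a b => (⟨Finset.image t.top Finset.univ, topImage_mem hab t⟩ :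
        {S : Finset ℕ // S ∈ ballotSet (a + b) b})) := by
    constructor
    · intro t1 t2 h
      have himg : Finset.image t1.top Finset.univ = Finset.image t2.top Finset.univ :=
        congrArg Subtype.val h
      have hcard1 : (Finset.image t1.top Finset.univ).card = b := by
        rw [Finset.card_image_of_injective _ t1.top_mono.injective, Finset.card_univ,
          Fintype.card_fin]
      have htopeq : t1.top = t2.top := by
        have e1 := Finset.orderEmbOfFin_unique hcard1 (f := t1.top)
          (fun x => Finset.mem_image_of_mem _ (Finset.mem_univ x)) t1.top_mono
        have e2 := Finset.orderEmbOfFin_unique hcard1 (f := t2.top)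
          (fun x => himg ▸ Finset.mem_image_of_mem _ (Finset.mem_univ x)) t2.top_mono
        rw [e1, e2]
      have hbotimg : Finset.image t1.bot Finset.univ = Finset.image t2.bot Finset.univ := by
        rw [botImage, botImage, himg]
      have hcard2 : (Finset.image t1.bot Finset.univ).card = a := by
        rw [Finset.card_image_of_injective _ t1.bot_mono.injective, Finset.card_univ,
          Fintype.card_fin]
      have hboteq : t1.bot = t2.bot := by
        have e1 := Finset.orderEmbOfFin_unique hcard2 (f := t1.bot)
          (fun x => Finset.mem_image_of_mem _ (Finset.mem_univ x)) t1.bot_mono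
        have e2 := Finset.orderEmbOfFin_unique hcard2 (f := t2.bot)
          (fun x => hbotimg ▸ Finset.mem_image_of_mem _ (Finset.mem_univ x)) t2.bot_mono
        rw [e1, e2]
      exact SYT2.ext' hboteq htopeq
    · rintro ⟨S, hS⟩
      obtain ⟨hsub, hcard, hball⟩ := mem_ballotSet.1 hS
      set T := Finset.Icc 1 (a + b) \ S with hT
      have hTcard : T.card = a := by
        rw [hT, Finset.card_sdiff_of_subset hsub, Nat.card_Icc, hcard]; omega
      refine ⟨⟨fun j => T.orderEmbOfFin hTcard j, fun i => S.orderEmbOfFin hcard i,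
        (T.orderEmbOfFin hTcard).strictMono, (S.orderEmbOfFin hcard).strictMono,
        ?_, ?_, ?_⟩, ?_⟩
      · -- col
        intro i h
        set v := S.orderEmbOfFin hcard i with hv
        have hvS : v ∈ S := Finset.orderEmbOfFin_mem S hcard i
        have hvn : v ∈ Finset.Icc 1 (a + b) := hsub hvS
        have hvab : v ≤ a + b := (Finset.mem_Icc.1 hvn).2
        have c1 : (i : ℕ) + 1 ≤ (S.filter (· ≤ v)).card := by
          have hsub2 : (Finset.Iic i).image (S.orderEmbOfFin hcard) ⊆ S.filter (· ≤ v) := by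
            intro x hx
            obtain ⟨j, hj, rfl⟩ := Finset.mem_image.1 hx
            exact Finset.mem_filter.2 ⟨Finset.orderEmbOfFin_mem S hcard j,
              (S.orderEmbOfFin hcard).monotone (Finset.mem_Iic.1 hj)⟩
          calc (i : ℕ) + 1 = (Finset.Iic i).card := (Fin.card_Iic i).symm
          _ = ((Finset.Iic i).image (S.orderEmbOfFin hcard)).card :=
            (Finset.card_image_of_injective _ (S.orderEmbOfFin hcard).injective).symm
          _ ≤ _ := Finset.card_le_card hsub2
        have c2 := hball v
        have c3 : S.filter (· ≤ v) ⊆ Finset.Icc 1 v := by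
          intro x hx
          obtain ⟨hxS, hxv⟩ := Finset.mem_filter.1 hx
          have h1 := hsub hxS
          rw [Finset.mem_Icc] at h1 ⊢
          omega
        have c4 : T.filter (· ≤ v) = Finset.Icc 1 v \ S.filter (· ≤ v) := by
          ext x
          rw [Finset.mem_filter, Finset.mem_sdiff, Finset.mem_sdiff, Finset.mem_filter,
            Finset.mem_Icc, Finset.mem_Icc]
          constructor
          · rintro ⟨⟨hxI, hxS⟩, hxv⟩
            exact ⟨⟨hxI.1, hxv⟩, fun h2 => hxS h2.1⟩
          · rintro ⟨⟨hx1, hxv⟩, hns⟩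
            exact ⟨⟨⟨hx1, le_trans hxv hvab⟩, fun hxS => hns ⟨hxS, hxv⟩⟩, hxv⟩
        have c5 : (T.filter (· ≤ v)).card = v - (S.filter (· ≤ v)).card := by
          rw [c4, Finset.card_sdiff_of_subset c3, Nat.card_Icc]
          omega
        have c6 : (i : ℕ) + 1 ≤ (T.filter (· ≤ v)).card := by omega
        have c7 : T.orderEmbOfFin hTcard ⟨(i : ℕ), h⟩ ≤ v :=
          orderEmb_le_of_card_filter hTcard ⟨(i : ℕ), h⟩ v (by simpa using c6)
        have c8 : T.orderEmbOfFin hTcard ⟨(i : ℕ), h⟩ ≠ v := by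
          intro he
          have hmem : T.orderEmbOfFin hTcard ⟨(i : ℕ), h⟩ ∈ T :=
            Finset.orderEmbOfFin_mem T hTcard _
          rw [he] at hmem
          exact (Finset.mem_sdiff.1 hmem).2 hvS
        exact lt_of_le_of_ne c7 c8
      · -- mem
        rintro (j | i)
        · have h1 : T.orderEmbOfFin hTcard j ∈ T := Finset.orderEmbOfFin_mem T hTcard j
          simpa using (Finset.mem_sdiff.1 h1).1
        · simpa using hsub (Finset.orderEmbOfFin_mem S hcard i)
      · -- inj
        rintro (j1 | i1) (j2 | i2) hEq <;>
          simp only [Sum.elim_inl, Sum.elim_inr] at hEq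
        · exact congrArg Sum.inl ((T.orderEmbOfFin hTcard).injective hEq)
        · exfalso
          have h1 : T.orderEmbOfFin hTcard j1 ∈ T := Finset.orderEmbOfFin_mem T hTcard j1
          exact (Finset.mem_sdiff.1 h1).2 (hEq ▸ Finset.orderEmbOfFin_mem S hcard i2)
        · exfalso
          have h1 : T.orderEmbOfFin hTcard j2 ∈ T := Finset.orderEmbOfFin_mem T hTcard j2
          exact (Finset.mem_sdiff.1 h1).2 (hEq ▸ Finset.orderEmbOfFin_mem S hcard i1)
        · exact congrArg Sum.inr ((S.orderEmbOfFin hcard).injective hEq)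
      · -- f t = ⟨S, hS⟩
        apply Subtype.ext
        exact image_orderEmbOfFin S b hcard
  rw [Nat.card_eq_of_bijective _ hbij, Nat.card_eq_finsetCard]

/-- For `a ≥ b ≥ 0`, the number of standard Young tableaux of shape `(a, b)` equals
`C(a+b, b) - C(a+b, b-1)` (with `C(m, -1) = 0`). -/
theorem stmt12 (a b : ℕ) (hab : b ≤ a) :
    Nat.card (SYT2 a b)
      = Nat.choose (a + b) b - (if b = 0 then 0 else Nat.choose (a + b) (b - 1)) := by
  have h1 := syt_card_eq a b hab
  have h2 := ballot_card (a + b) b (by omega)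
  rcases Nat.eq_zero_or_pos b with rfl | hb
  · simp only [if_pos rfl] at h2 ⊢
    omega
  · rw [if_neg (by omega)] at h2
    rw [if_neg (by omega)]
    omega
end

section
/- For n ≥ 2k+1 ≥ 1, the number of standard shifted tableaux of shape (n−k, k) equals C(n−1, k) − C(n−1, k−1), where C denotes the binomial coefficient (with C(m, −1) = 0). -/
open Finset


/-- The set of possible top-row entry sets. -/
def goodSet (n b : ℕ) : Finset (Finset ℕ) :=
  ((Finset.Icc 1 n).powersetCard b).filter
    (fun T => ∀ t ∈ T, 2 * (T.filter (fun u => u ≤ t)).card < t)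

lemma mem_goodSet {n b : ℕ} {T : Finset ℕ} :
    T ∈ goodSet n b ↔ T ⊆ Finset.Icc 1 n ∧ T.card = b ∧
      ∀ t ∈ T, 2 * (T.filter (fun u => u ≤ t)).card < t := by
  simp [goodSet, Finset.mem_powersetCard, and_assoc]

lemma goodSet_zero (n : ℕ) : goodSet n 0 = {∅} := by
  ext T
  simp only [mem_goodSet, Finset.mem_singleton, Finset.card_eq_zero]
  constructor
  · rintro ⟨-, rfl, -⟩; rfl
  · rintro rfl
    exact ⟨Finset.empty_subset _, rfl, by simp⟩

lemma goodSet_empty (n k : ℕ) (hk : 1 ≤ k) (hn : n ≤ 2 * k) : goodSet n k = ∅ := by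
  rw [Finset.eq_empty_iff_forall_notMem]
  intro T hT
  rw [mem_goodSet] at hT
  obtain ⟨hsub, hcard, hcond⟩ := hT
  have hne : T.Nonempty := by rw [← Finset.card_pos, hcard]; omega
  have hmax := T.max'_mem hne
  have h1 := hcond _ hmax
  have h2 : T.filter (fun u => u ≤ T.max' hne) = T := by
    apply Finset.filter_true_of_mem
    intro u hu; exact Finset.le_max' T u hu
  rw [h2, hcard] at h1
  have := hsub hmax
  rw [Finset.mem_Icc] at this
  omega

lemma goodSet_card_rec (n k : ℕ) (hk : 1 ≤ k) (hn : 2 * k + 1 ≤ n) :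
    (goodSet n k).card = (goodSet (n-1) k).card + (goodSet (n-1) (k-1)).card := by
  have hsplit : goodSet n k
      = goodSet (n-1) k ∪ (goodSet (n-1) (k-1)).image (insert n) := by
    ext T
    rw [Finset.mem_union, mem_goodSet]
    constructor
    · rintro ⟨hsub, hcard, hcond⟩
      by_cases hnT : n ∈ T
      · right
        rw [Finset.mem_image]
        refine ⟨T.erase n, ?_, Finset.insert_erase hnT⟩
        rw [mem_goodSet]
        refine ⟨?_, ?_, ?_⟩
        · intro t ht
          have h1 := hsub (Finset.mem_of_mem_erase ht)
          have h2 := Finset.ne_of_mem_erase ht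
          rw [Finset.mem_Icc] at h1 ⊢
          omega
        · rw [Finset.card_erase_of_mem hnT, hcard]
        · intro t ht
          have htT := Finset.mem_of_mem_erase ht
          have h2 := Finset.ne_of_mem_erase ht
          have h1 := hsub htT
          rw [Finset.mem_Icc] at h1
          have hfe : (T.erase n).filter (fun u => u ≤ t) = T.filter (fun u => u ≤ t) := by
            ext u
            simp only [Finset.mem_filter, Finset.mem_erase]
            constructor
            · rintro ⟨⟨-, hu⟩, hut⟩; exact ⟨hu, hut⟩
            · rintro ⟨hu, hut⟩; exact ⟨⟨by omega, hu⟩, hut⟩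
          rw [hfe]
          exact hcond t htT
      · left
        rw [mem_goodSet]
        refine ⟨?_, hcard, hcond⟩
        intro t ht
        have h1 := hsub ht
        have : t ≠ n := fun he => hnT (he ▸ ht)
        rw [Finset.mem_Icc] at h1 ⊢
        omega
    · rintro (hT | hT)
      · rw [mem_goodSet] at hT
        obtain ⟨hsub, hcard, hcond⟩ := hT
        refine ⟨hsub.trans (Finset.Icc_subset_Icc_right (by omega)), hcard, hcond⟩
      · rw [Finset.mem_image] at hT
        obtain ⟨A, hA, rfl⟩ := hT
        rw [mem_goodSet] at hA
        obtain ⟨hsub, hcard, hcond⟩ := hA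
        have hnA : n ∉ A := by
          intro hc
          have := hsub hc
          rw [Finset.mem_Icc] at this
          omega
        refine ⟨?_, ?_, ?_⟩
        · intro t ht
          rw [Finset.mem_insert] at ht
          rcases ht with rfl | ht
          · rw [Finset.mem_Icc]; omega
          · have := hsub ht
            rw [Finset.mem_Icc] at this ⊢
            omega
        · rw [Finset.card_insert_of_notMem hnA, hcard]; omega
        · intro t ht
          rw [Finset.mem_insert] at ht
          rcases ht with rfl | ht
          · have hfull : (insert t A).filter (fun u => u ≤ t) = insert t A := by
              apply Finset.filter_true_of_mem
              intro u hu
              rw [Finset.mem_insert] at hu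
              rcases hu with rfl | hu
              · exact le_rfl
              · have := hsub hu; rw [Finset.mem_Icc] at this; omega
            rw [hfull, Finset.card_insert_of_notMem hnA, hcard]
            omega
          · have htn : t < n := by
              have := hsub ht; rw [Finset.mem_Icc] at this; omega
            have hfe : (insert n A).filter (fun u => u ≤ t) = A.filter (fun u => u ≤ t) := by
              ext u
              simp only [Finset.mem_filter, Finset.mem_insert]
              constructor
              · rintro ⟨rfl | hu, hut⟩
                · omega
                · exact ⟨hu, hut⟩
              · rintro ⟨hu, hut⟩; exact ⟨Or.inr hu, hut⟩
            rw [hfe]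
            exact hcond t ht
  have hinj : Set.InjOn (insert n) ((goodSet (n-1) (k-1) : Finset (Finset ℕ)) : Set (Finset ℕ)) := by
    intro A hA B hB hAB
    rw [Finset.mem_coe, mem_goodSet] at hA hB
    have hnA : n ∉ A := fun hc => by have := hA.1 hc; rw [Finset.mem_Icc] at this; omega
    have hnB : n ∉ B := fun hc => by have := hB.1 hc; rw [Finset.mem_Icc] at this; omega
    have := congrArg (fun S => Finset.erase S n) hAB
    simpa [Finset.erase_insert hnA, Finset.erase_insert hnB] using this
  have hdisj : Disjoint (goodSet (n-1) k) ((goodSet (n-1) (k-1)).image (insert n)) := by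
    rw [Finset.disjoint_left]
    intro T hT hT2
    rw [mem_goodSet] at hT
    rw [Finset.mem_image] at hT2
    obtain ⟨A, hA, rfl⟩ := hT2
    have := hT.1 (Finset.mem_insert_self n A)
    rw [Finset.mem_Icc] at this
    omega
  rw [hsplit, Finset.card_union_of_disjoint hdisj, Finset.card_image_of_injOn hinj]

lemma goodSet_card (n k : ℕ) (hk : 1 ≤ k) (hn : 2 * k ≤ n) :
    (goodSet n k).card + Nat.choose (n-1) (k-1) = Nat.choose (n-1) k := by
  induction n using Nat.strong_induction_on generalizing k with
  | _ n ih =>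
    rcases Nat.lt_or_ge n (2*k+1) with hlt | hge
    · -- n = 2k
      have hn2 : n = 2 * k := by omega
      rw [goodSet_empty n k hk (by omega), Finset.card_empty, Nat.zero_add]
      have h1 : k - 1 = (n - 1) - k := by omega
      rw [h1, Nat.choose_symm (by omega)]
    · rw [goodSet_card_rec n k hk hge]
      rcases Nat.lt_or_ge k 2 with hk2 | hk2
      · -- k = 1
        have hk1 : k = 1 := by omega
        subst hk1
        rw [goodSet_zero, Finset.card_singleton]
        have ih1 := ih (n-1) (by omega) 1 le_rfl (by omega)
        have e : (1:ℕ) - 1 = 0 := rfl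
        rw [e] at ih1 ⊢
        simp only [Nat.choose_one_right, Nat.choose_zero_right] at ih1 ⊢
        omega
      · have ih1 := ih (n-1) (by omega) k hk (by omega)
        have ih2 := ih (n-1) (by omega) (k-1) (by omega) (by omega)
        have hp1 : Nat.choose (n-2+1) (k-1+1) = Nat.choose (n-2) (k-1) + Nat.choose (n-2) (k-1+1) :=
          Nat.choose_succ_succ _ _
        have hp2 : Nat.choose (n-2+1) (k-2+1) = Nat.choose (n-2) (k-2) + Nat.choose (n-2) (k-2+1) :=
          Nat.choose_succ_succ _ _
        have e1 : n - 2 + 1 = n - 1 := by omega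
        have e2 : k - 1 + 1 = k := by omega
        have e5 : k - 2 + 1 = k - 1 := by omega
        rw [e1, e2] at hp1
        rw [e1, e5] at hp2
        have e3 : n - 1 - 1 = n - 2 := by omega
        have e4 : k - 1 - 1 = k - 2 := by omega
        rw [e3] at ih1 ih2
        rw [e4] at ih2
        omega

/-- A standard shifted tableau of two-row shifted shape `(a, b)` with `a > b`: the top row is
indented one cell, so the top-row cell in column `i` sits above the bottom-row cell in
column `i+1`. Rows increase, columns increase, entries are exactly `1, …, a+b`. -/
structure SShT2 (a b : ℕ) where
  bot : Fin a → ℕ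
  top : Fin b → ℕ
  bot_mono : StrictMono bot
  top_mono : StrictMono top
  col : ∀ i : Fin b, ∀ h : (i : ℕ) + 1 < a, bot ⟨(i : ℕ) + 1, h⟩ < top i
  mem : ∀ x : Fin a ⊕ Fin b, Sum.elim bot top x ∈ Finset.Icc 1 (a + b)
  inj : Function.Injective (Sum.elim bot top)


lemma rank_filter_le (s : Finset ℕ) {m : ℕ} (h : s.card = m) (j : Fin m) :
    (s.filter (fun t => t ≤ s.orderEmbOfFin h j)).card = (j : ℕ) + 1 := by
  have heq : s.filter (fun t => t ≤ s.orderEmbOfFin h j)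
      = (Finset.Iic j).image (s.orderEmbOfFin h) := by
    ext t
    simp only [mem_filter, mem_image, mem_Iic]
    constructor
    · rintro ⟨hts, htle⟩
      have : t ∈ Set.range (s.orderEmbOfFin h) := by
        rw [Finset.range_orderEmbOfFin]; exact hts
      obtain ⟨i, rfl⟩ := this
      exact ⟨i, (s.orderEmbOfFin h).le_iff_le.mp htle, rfl⟩
    · rintro ⟨i, hij, rfl⟩
      exact ⟨Finset.orderEmbOfFin_mem s h i, (s.orderEmbOfFin h).le_iff_le.mpr hij⟩
  rw [heq, Finset.card_image_of_injective _ (s.orderEmbOfFin h).injective, Fin.card_Iic]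

lemma orderEmbOfFin_lt_of_rank (s : Finset ℕ) {m : ℕ} (h : s.card = m) (j : Fin m) (x : ℕ)
    (hc : (j : ℕ) + 1 ≤ (s.filter (fun t => t < x)).card) : s.orderEmbOfFin h j < x := by
  by_contra hle
  push_neg at hle
  have hsub : s.filter (fun t => t < x) ⊆ (Finset.Iio j).image (s.orderEmbOfFin h) := by
    intro t ht
    simp only [mem_filter] at ht
    have : t ∈ Set.range (s.orderEmbOfFin h) := by
      rw [Finset.range_orderEmbOfFin]; exact ht.1
    obtain ⟨i, rfl⟩ := this
    exact mem_image.mpr ⟨i, mem_Iio.mpr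
      ((s.orderEmbOfFin h).lt_iff_lt.mp (lt_of_lt_of_le ht.2 hle)), rfl⟩
  have hcard := Finset.card_le_card hsub
  rw [Finset.card_image_of_injective _ (s.orderEmbOfFin h).injective, Fin.card_Iio] at hcard
  omega

namespace SShT2

variable {a b : ℕ}

lemma bot_ne_top (x : SShT2 a b) (u : Fin a) (v : Fin b) : x.bot u ≠ x.top v := by
  intro hc
  have := x.inj (a₁ := Sum.inl u) (a₂ := Sum.inr v) hc
  exact Sum.inl_ne_inr this

lemma bot_mem (x : SShT2 a b) (u : Fin a) : x.bot u ∈ Finset.Icc 1 (a + b) := x.mem (Sum.inl u)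
lemma top_mem (x : SShT2 a b) (v : Fin b) : x.top v ∈ Finset.Icc 1 (a + b) := x.mem (Sum.inr v)

/-- counting lower bound on top entries -/
lemma top_lb (hab : b < a) (x : SShT2 a b) (i : Fin b) :
    2 * ((i : ℕ) + 1) < x.top i := by
  have h1 : (i : ℕ) + 1 < a := by have := i.2; omega
  set B : Finset ℕ := ((Finset.Iic (⟨(i : ℕ) + 1, h1⟩ : Fin a)).image x.bot)
      ∪ ((Finset.Iio i).image x.top) with hB
  have hdisj : Disjoint ((Finset.Iic (⟨(i : ℕ) + 1, h1⟩ : Fin a)).image x.bot)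
      ((Finset.Iio i).image x.top) := by
    rw [Finset.disjoint_left]
    rintro t ht1 ht2
    rw [Finset.mem_image] at ht1 ht2
    obtain ⟨u, -, rfl⟩ := ht1
    obtain ⟨v, -, hv⟩ := ht2
    exact x.bot_ne_top u v hv.symm
  have hcard : B.card = 2 * (i : ℕ) + 2 := by
    rw [hB, Finset.card_union_of_disjoint hdisj,
      Finset.card_image_of_injective _ x.bot_mono.injective,
      Finset.card_image_of_injective _ x.top_mono.injective,
      Fin.card_Iic, Fin.card_Iio]
    have hj : ((⟨(i : ℕ) + 1, h1⟩ : Fin a) : ℕ) = (i : ℕ) + 1 := rfl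
    rw [hj]
    omega
  have hsub : B ⊆ Finset.Icc 1 (x.top i - 1) := by
    intro t ht
    rw [hB, Finset.mem_union, Finset.mem_image, Finset.mem_image] at ht
    rcases ht with ⟨u, hu, rfl⟩ | ⟨v, hv, rfl⟩
    · have h2 : x.bot u ≤ x.bot ⟨(i : ℕ) + 1, h1⟩ := by
        apply x.bot_mono.monotone
        exact Finset.mem_Iic.mp hu
      have h3 := x.col i h1
      have h4 := Finset.mem_Icc.mp (x.bot_mem u)
      rw [Finset.mem_Icc]
      omega
    · have h2 : x.top v < x.top i := x.top_mono (Finset.mem_Iio.mp hv)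
      have h4 := Finset.mem_Icc.mp (x.top_mem v)
      rw [Finset.mem_Icc]
      omega
  have := Finset.card_le_card hsub
  rw [hcard, Nat.card_Icc] at this
  have h4 := Finset.mem_Icc.mp (x.top_mem i)
  omega

/-- the map to good sets -/
def topSet (x : SShT2 a b) : Finset ℕ := Finset.image x.top Finset.univ

lemma topSet_card (x : SShT2 a b) : x.topSet.card = b := by
  rw [topSet, Finset.card_image_of_injective _ x.top_mono.injective, Finset.card_univ,
    Fintype.card_fin]

lemma top_eq_orderEmbOfFin (x : SShT2 a b) : x.top = x.topSet.orderEmbOfFin x.topSet_card := by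
  apply Finset.orderEmbOfFin_unique
  · intro i
    exact Finset.mem_image.mpr ⟨i, Finset.mem_univ i, rfl⟩
  · exact x.top_mono

lemma topSet_mem_goodSet (hab : b < a) (x : SShT2 a b) : x.topSet ∈ goodSet (a + b) b := by
  rw [mem_goodSet]
  refine ⟨?_, x.topSet_card, ?_⟩
  · intro t ht
    obtain ⟨i, -, rfl⟩ := Finset.mem_image.mp ht
    exact x.top_mem i
  · intro t ht
    obtain ⟨i, -, rfl⟩ := Finset.mem_image.mp ht
    have hr : (x.topSet.filter (fun u => u ≤ x.top i)).card = (i : ℕ) + 1 := by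
      conv_lhs => rw [x.top_eq_orderEmbOfFin]
      exact rank_filter_le _ _ i
    rw [hr]
    exact x.top_lb hab i

lemma botSet_eq (x : SShT2 a b) :
    Finset.image x.bot Finset.univ = Finset.Icc 1 (a + b) \ x.topSet := by
  apply Finset.eq_of_subset_of_card_le
  · intro t ht
    obtain ⟨u, -, rfl⟩ := Finset.mem_image.mp ht
    rw [Finset.mem_sdiff]
    refine ⟨x.bot_mem u, ?_⟩
    intro hc
    obtain ⟨v, -, hv⟩ := Finset.mem_image.mp hc
    exact x.bot_ne_top u v hv.symm
  · rw [Finset.card_sdiff_of_subset (fun t ht => by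
        obtain ⟨i, -, rfl⟩ := Finset.mem_image.mp ht; exact x.top_mem i),
      x.topSet_card, Nat.card_Icc,
      Finset.card_image_of_injective _ x.bot_mono.injective, Finset.card_univ, Fintype.card_fin]
    omega

lemma bot_eq_orderEmbOfFin (x : SShT2 a b)
    (hc : (Finset.Icc 1 (a + b) \ x.topSet).card = a) :
    x.bot = (Finset.Icc 1 (a + b) \ x.topSet).orderEmbOfFin hc := by
  apply Finset.orderEmbOfFin_unique
  · intro u
    rw [← x.botSet_eq]
    exact Finset.mem_image.mpr ⟨u, Finset.mem_univ u, rfl⟩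
  · exact x.bot_mono

lemma ext' {x y : SShT2 a b} (h1 : x.bot = y.bot) (h2 : x.top = y.top) : x = y := by
  cases x; cases y
  simp only at h1 h2
  subst h1; subst h2
  rfl

end SShT2

lemma card_SShT2 (a b : ℕ) (hab : b < a) :
    Nat.card (SShT2 a b) = (goodSet (a + b) b).card := by
  have hbij : ∃ F : SShT2 a b → {T // T ∈ goodSet (a + b) b}, Function.Bijective F := by
    refine ⟨fun x => ⟨x.topSet, x.topSet_mem_goodSet hab⟩, ?_, ?_⟩
    · intro x y hxy
      have hT : x.topSet = y.topSet := congrArg Subtype.val hxy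
      have htop : x.top = y.top := by
        rw [x.top_eq_orderEmbOfFin]
        symm
        apply Finset.orderEmbOfFin_unique
        · intro i
          rw [hT]
          exact Finset.mem_image.mpr ⟨i, Finset.mem_univ i, rfl⟩
        · exact y.top_mono
      have hbotset : Finset.image y.bot Finset.univ = Finset.image x.bot Finset.univ := by
        rw [x.botSet_eq, y.botSet_eq, hT]
      have hSc : (Finset.image x.bot Finset.univ).card = a := by
        rw [Finset.card_image_of_injective _ x.bot_mono.injective, Finset.card_univ,
          Fintype.card_fin]
      have hbot : x.bot = y.bot := by
        have e1 : x.bot = (Finset.image x.bot Finset.univ).orderEmbOfFin hSc :=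
          Finset.orderEmbOfFin_unique hSc
            (fun u => Finset.mem_image.mpr ⟨u, Finset.mem_univ u, rfl⟩) x.bot_mono
        have e2 : y.bot = (Finset.image x.bot Finset.univ).orderEmbOfFin hSc :=
          Finset.orderEmbOfFin_unique hSc
            (fun u => hbotset ▸ Finset.mem_image.mpr ⟨u, Finset.mem_univ u, rfl⟩) y.bot_mono
        rw [e1, e2]
      exact SShT2.ext' hbot htop
    · rintro ⟨T, hT⟩
      rw [mem_goodSet] at hT
      obtain ⟨hsub, hcard, hcond⟩ := hT
      have hbn : b ≤ a + b := by omega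
      have hC : (Finset.Icc 1 (a + b) \ T).card = a := by
        rw [Finset.card_sdiff_of_subset hsub, hcard, Nat.card_Icc]
        omega
      refine ⟨⟨(Finset.Icc 1 (a + b) \ T).orderEmbOfFin hC, T.orderEmbOfFin hcard,
        ((Finset.Icc 1 (a + b) \ T).orderEmbOfFin hC).strictMono, (T.orderEmbOfFin hcard).strictMono, ?_, ?_, ?_⟩, ?_⟩
      · -- col
        intro i hia
        apply orderEmbOfFin_lt_of_rank
        set t := T.orderEmbOfFin hcard i with ht
        have htT : t ∈ T := Finset.orderEmbOfFin_mem T hcard i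
        have htIcc := Finset.mem_Icc.mp (hsub htT)
        have hrank : (T.filter (fun u => u ≤ t)).card = (i : ℕ) + 1 := rank_filter_le T hcard i
        have hgood := hcond t htT
        rw [hrank] at hgood
        -- t ≥ 2i+3
        have hTlt : (T.filter (fun u => u < t)).card = (i : ℕ) := by
          have : T.filter (fun u => u ≤ t) = insert t (T.filter (fun u => u < t)) := by
            ext u
            simp only [Finset.mem_filter, Finset.mem_insert]
            constructor
            · rintro ⟨hu, hut⟩
              rcases Nat.lt_or_ge u t with h' | h'
              · exact Or.inr ⟨hu, h'⟩
              · exact Or.inl (by omega)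
            · rintro (rfl | ⟨hu, hut⟩)
              · exact ⟨htT, le_rfl⟩
              · exact ⟨hu, by omega⟩
          rw [this, Finset.card_insert_of_notMem (by simp)] at hrank
          omega
        have hClt : (i : ℕ) + 2 ≤ ((Finset.Icc 1 (a + b) \ T).filter (fun u => u < t)).card := by
          have hCf : (Finset.Icc 1 (a + b) \ T).filter (fun u => u < t)
              = (Finset.Icc 1 (t - 1)) \ (T.filter (fun u => u < t)) := by
            ext u
            simp only [Finset.mem_filter, Finset.mem_sdiff, Finset.mem_Icc]
            constructor
            · rintro ⟨⟨⟨hu0, hu1⟩, hu2⟩, hut⟩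
              exact ⟨⟨hu0, by omega⟩, fun hc => hu2 hc.1⟩
            · rintro ⟨⟨hu1, hu2⟩, hu3⟩
              have hut : u < t := by omega
              refine ⟨⟨⟨hu1, by omega⟩, fun hc => hu3 ⟨hc, hut⟩⟩, hut⟩
          rw [hCf, Finset.card_sdiff_of_subset (by
              intro u hu
              rw [Finset.mem_filter] at hu
              have := Finset.mem_Icc.mp (hsub hu.1)
              rw [Finset.mem_Icc]
              omega),
            hTlt, Nat.card_Icc]
          omega
        have hj : ((⟨(i : ℕ) + 1, hia⟩ : Fin a) : ℕ) = (i : ℕ) + 1 := rfl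
        rw [hj]
        omega
      · -- mem
        rintro (u | v)
        · have := Finset.orderEmbOfFin_mem (Finset.Icc 1 (a + b) \ T) hC u
          exact (Finset.mem_sdiff.mp this).1
        · exact hsub (Finset.orderEmbOfFin_mem T hcard v)
      · -- inj
        rintro (u | u) (v | v) huv <;> simp only [Sum.elim_inl, Sum.elim_inr] at huv
        · exact congrArg Sum.inl (((Finset.Icc 1 (a + b) \ T).orderEmbOfFin hC).injective huv)
        · exfalso
          have h1 := Finset.orderEmbOfFin_mem (Finset.Icc 1 (a + b) \ T) hC u
          have h2 := Finset.orderEmbOfFin_mem T hcard v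
          exact (Finset.mem_sdiff.mp h1).2 (huv ▸ h2)
        · exfalso
          have h1 := Finset.orderEmbOfFin_mem (Finset.Icc 1 (a + b) \ T) hC v
          have h2 := Finset.orderEmbOfFin_mem T hcard u
          exact (Finset.mem_sdiff.mp h1).2 (huv.symm ▸ h2)
        · exact congrArg Sum.inr ((T.orderEmbOfFin hcard).injective huv)
      · -- F x = T
        apply Subtype.ext
        show Finset.image (⇑(T.orderEmbOfFin hcard)) Finset.univ = T
        apply Finset.eq_of_subset_of_card_le
        · intro t ht
          obtain ⟨i, -, rfl⟩ := Finset.mem_image.mp ht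
          exact Finset.orderEmbOfFin_mem T hcard i
        · rw [hcard, Finset.card_image_of_injective _ (T.orderEmbOfFin hcard).injective,
            Finset.card_univ, Fintype.card_fin]
  obtain ⟨F, hF⟩ := hbij
  rw [Nat.card_eq_of_bijective F hF, ← Nat.card_eq_finsetCard]

/-- For `n ≥ 2k+1`, the number of standard shifted tableaux of shape `(n-k, k)` equals
`C(n-1, k) - C(n-1, k-1)` (with `C(m, -1) = 0`). -/
theorem stmt13 (n k : ℕ) (h : 2 * k + 1 ≤ n) :
    Nat.card (SShT2 (n - k) k)
      = Nat.choose (n - 1) k - (if k = 0 then 0 else Nat.choose (n - 1) (k - 1)) := by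
  have hab : k < n - k := by omega
  have hnk : (n - k) + k = n := by omega
  rw [card_SShT2 (n - k) k hab, hnk]
  by_cases hk : k = 0
  · subst hk
    rw [if_pos rfl, goodSet_zero, Finset.card_singleton, Nat.choose_zero_right]
  · rw [if_neg hk]
    have := goodSet_card n k (by omega) (by omega)
    omega
end

section
/- For every n ≥ 1, the identity ∑_{k=0}^{⌊n/2⌋} (n−2k) · (C(n−1, k) − C(n−1, k−1)) = 2^{n−1} holds, where C denotes the binomial coefficient with the convention C(n−1, −1) = 0. -/
open Finset

theorem sum_range_mul_choose_sub_choose_pred (a : ℤ) (N m : ℕ) :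
    ∑ k ∈ range (m + 1),
      (a - 2 * k) * ((N.choose k : ℤ) - (if k = 0 then 0 else (N.choose (k - 1) : ℤ)))
      = (a - 2 * m) * N.choose m + 2 * ∑ j ∈ range m, (N.choose j : ℤ) := by
  induction m with
  | zero => simp
  | succ m ih =>
    rw [sum_range_succ, ih, sum_range_succ, if_neg m.succ_ne_zero, Nat.add_sub_cancel]
    push_cast
    ring

namespace Nat

theorem two_mul_sum_range_choose_add_choose_middle (m : ℕ) :
    2 * ∑ j ∈ range m, (2 * m).choose j + (2 * m).choose m = 4 ^ m := by
  have pascal : ∑ j ∈ range (m + 1), (2 * m + 1).choose j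
      = ∑ j ∈ range (m + 1), (2 * m).choose j + ∑ j ∈ range m, (2 * m).choose j := by
    rw [sum_range_succ' _ m, sum_range_succ' ((2 * m).choose) m]
    simp only [choose_succ_succ', sum_add_distrib, choose_zero_right]
    ring
  rw [← sum_range_choose_halfway m, pascal, sum_range_succ]
  ring

end Nat

/-- For `n ≥ 1`, `∑_{k=0}^{⌊n/2⌋} (n-2k)(C(n-1,k) - C(n-1,k-1)) = 2^(n-1)`,
with `C(n-1, -1) = 0`. -/
theorem stmt14 (n : ℕ) (hn : 1 ≤ n) :
    ∑ k ∈ Finset.range (n / 2 + 1),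
      ((n : ℤ) - 2 * k) *
        ((Nat.choose (n - 1) k : ℤ) - (if k = 0 then 0 else (Nat.choose (n - 1) (k - 1) : ℤ)))
      = 2 ^ (n - 1) := by
  obtain ⟨m, rfl | rfl⟩ := Nat.even_or_odd' n
  · obtain ⟨m, rfl⟩ : ∃ m', m = m' + 1 := Nat.exists_eq_add_of_le' (by omega)
    have halfway := Nat.sum_range_choose_halfway m
    zify at halfway
    rw [show (4 : ℤ) = 2 ^ 2 by norm_num, ← pow_mul] at halfway
    rw [show 2 * (m + 1) / 2 = m + 1 by omega, show 2 * (m + 1) - 1 = 2 * m + 1 by omega,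
      sum_range_mul_choose_sub_choose_pred]
    push_cast
    linear_combination 2 * halfway
  · have middle := Nat.two_mul_sum_range_choose_add_choose_middle m
    zify at middle
    rw [show (4 : ℤ) = 2 ^ 2 by norm_num, ← pow_mul] at middle
    rw [show (2 * m + 1) / 2 = m by omega, Nat.add_sub_cancel,
      sum_range_mul_choose_sub_choose_pred]
    push_cast
    linear_combination middle
end

section
/- For any set S ⊆ [n−1] and composition β of n, if S ⊆ set(β) △ (set(β)+1), then the set {n+1−s : s ∈ S} is contained in set(β^r) △ (set(β^r)+1), where β^r is the reverse composition. -/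
/-- `set(β)` for a composition `β`, viewed as a list of its parts: the partial sums
`β_1, β_1+β_2, …, β_1+⋯+β_{k-1}`. -/
def compSet (β : List ℕ) : Set ℕ :=
  { s | ∃ i : ℕ, 0 < i ∧ i < β.length ∧ s = (β.take i).sum }

/-! Reversing `β` reflects its partial sums, `set(β^r) = n - set(β)`. The reflection
`s ↦ n + 1 - s` therefore sends `set(β)` to `set(β^r) + 1` and `set(β) + 1` to `set(β^r)`,
and so maps `set(β) △ (set(β) + 1)` into `set(β^r) △ (set(β^r) + 1)`. -/

lemma List.sum_take_reverse (β : List ℕ) (i : ℕ) :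
    (β.reverse.take i).sum = β.sum - (β.take (β.length - i)).sum := by
  rw [List.take_reverse, List.sum_reverse, ← List.sum_take_add_sum_drop β (β.length - i)]
  omega

lemma compSet_subset_Iic_sum (β : List ℕ) : compSet β ⊆ Set.Iic β.sum := by
  rintro _ ⟨i, -, -, rfl⟩
  rw [Set.mem_Iic, ← List.sum_take_add_sum_drop β i]
  omega

lemma compSet_reverse (β : List ℕ) : compSet β.reverse = (β.sum - ·) '' compSet β := by
  ext t
  simp only [compSet, List.length_reverse, Set.mem_image]
  constructor
  · rintro ⟨i, hi0, hil, rfl⟩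
    exact ⟨_, ⟨β.length - i, by omega, by omega, rfl⟩, (List.sum_take_reverse β i).symm⟩
  · rintro ⟨_, ⟨i, hi0, hil, rfl⟩, rfl⟩
    refine ⟨β.length - i, by omega, by omega, ?_⟩
    rw [List.sum_take_reverse, Nat.sub_sub_self hil.le]

section Reflection

variable {A : Set ℕ} {n : ℕ}

lemma sub_mem_image_sub_iff (hA : A ⊆ Set.Iic n) {s : ℕ} (hs : s ≤ n + 1) :
    n + 1 - s ∈ (n - ·) '' A ↔ s ∈ (· + 1) '' A := by
  simp only [Set.mem_image]
  refine exists_congr fun u => and_congr_right fun hu => ?_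
  have : u ≤ n := hA hu
  omega

lemma sub_mem_image_succ_image_sub_iff (hA : A ⊆ Set.Iic n) {s : ℕ} (hs : s ≤ n + 1) :
    n + 1 - s ∈ (· + 1) '' ((n - ·) '' A) ↔ s ∈ A := by
  rw [Set.image_image]
  refine ⟨fun ⟨u, hu, heq⟩ => ?_, fun hsA => ⟨s, hsA, ?_⟩⟩
  · have : u ≤ n := hA hu
    dsimp only at heq
    rwa [show s = u by omega]
  · have : s ≤ n := hA hsA
    dsimp only
    omega

lemma sub_mem_symmDiff_image_succ (hA : A ⊆ Set.Iic n) {s : ℕ}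
    (hs : s ∈ symmDiff A ((· + 1) '' A)) :
    n + 1 - s ∈ symmDiff ((n - ·) '' A) ((· + 1) '' ((n - ·) '' A)) := by
  have hsn : s ≤ n + 1 := by
    rcases Set.symmDiff_subset_union hs with hsA | ⟨u, hu, rfl⟩
    · exact (hA hsA).trans n.le_succ
    · exact Nat.succ_le_succ (hA hu)
  rw [Set.mem_symmDiff] at hs ⊢
  rw [sub_mem_image_sub_iff hA hsn, sub_mem_image_succ_image_sub_iff hA hsn]
  tauto

end Reflection

theorem stmt16_general (n : ℕ) (β : List ℕ) (hsum : β.sum = n)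
    (S : Set ℕ)
    (h : S ⊆ symmDiff (compSet β) ((fun x => x + 1) '' compSet β)) :
    (fun s => n + 1 - s) '' S ⊆
      symmDiff (compSet β.reverse) ((fun x => x + 1) '' compSet β.reverse) := by
  subst hsum
  rintro _ ⟨s, hsS, rfl⟩
  rw [compSet_reverse]
  exact sub_mem_symmDiff_image_succ (compSet_subset_Iic_sum β) (h hsS)

/-- If `S ⊆ [n-1]` satisfies `S ⊆ set(β) △ (set(β)+1)`, then
`{ n+1-s : s ∈ S } ⊆ set(β^r) △ (set(β^r)+1)`. -/
theorem stmt16 (n : ℕ) (β : List ℕ) (hpos : ∀ x ∈ β, 0 < x) (hsum : β.sum = n)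
    (S : Set ℕ) (hS : S ⊆ Set.Icc 1 (n - 1))
    (h : S ⊆ symmDiff (compSet β) ((fun x => x + 1) '' compSet β)) :
    (fun s => n + 1 - s) '' S ⊆
      symmDiff (compSet β.reverse) ((fun x => x + 1) '' compSet β.reverse) :=
  stmt16_general n β hsum S h
end
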